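/- For every x in [0,1] and every natural number i > 0, f((2 - x) / 3^i) = (2^(i-1) / 3^i) · (1 + f(x)). -/

import Mathlib

open intervalIntegral Set

theorem apply_div_pow_of_apply_div {f : ℝ → ℝ} {a c : ℝ} (ha : 1 ≤ a)
    (h : ∀ x ∈ Icc (0:ℝ) 1, f (x / a) = c * f x) (n : ℕ) {x : ℝ} (hx : x ∈ Icc (0:ℝ) 1) :
    f (x / a ^ n) = c ^ n * f x := by
  induction n with
  | zero => simp
  | succ n ih =>
    have hmem : x / a ^ n ∈ Icc (0:ℝ) 1 :=
      ⟨div_nonneg hx.1 (by positivity),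
        div_le_one_of_le₀ (hx.2.trans (one_le_pow₀ ha)) (by positivity)⟩
    calc f (x / a ^ (n + 1)) = f (x / a ^ n / a) := by rw [pow_succ, div_div]
      _ = c ^ (n + 1) * f x := by rw [h _ hmem, ih]; ring

theorem bourbaki_stmt_general (f : ℝ → ℝ)
    (hw1 : ∀ x ∈ Set.Icc (0:ℝ) 1, f (x / 3) = (2/3) * f x)
    (hw2 : ∀ x ∈ Set.Icc (0:ℝ) 1, f ((2 - x) / 3) = (1/3) * (1 + f x)) :
    ∀ x ∈ Set.Icc (0:ℝ) 1, ∀ i : ℕ, 0 < i → f ((2 - x) / 3 ^ i) = (2 ^ (i - 1) / 3 ^ i) * (1 + f x) := by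
  intro x hx i hi
  obtain ⟨n, rfl⟩ := Nat.exists_eq_add_one.mpr hi
  have hy : (2 - x) / 3 ∈ Icc (0:ℝ) 1 := ⟨by linarith [hx.2], by linarith [hx.1]⟩
  calc f ((2 - x) / 3 ^ (n + 1)) = f ((2 - x) / 3 / 3 ^ n) := by rw [pow_succ', div_div]
    _ = (2 / 3) ^ n * ((1 / 3) * (1 + f x)) := by
      rw [apply_div_pow_of_apply_div (by norm_num) hw1 n hy, hw2 x hx]
    _ = 2 ^ n / 3 ^ (n + 1) * (1 + f x) := by rw [div_pow, pow_succ]; ring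

theorem bourbaki_stmt (f : ℝ → ℝ)
    (hcont : ContinuousOn f (Set.Icc 0 1))
    (h0 : f 0 = 0) (h1 : f 1 = 1)
    (hw1 : ∀ x ∈ Set.Icc (0:ℝ) 1, f (x / 3) = (2/3) * f x)
    (hw2 : ∀ x ∈ Set.Icc (0:ℝ) 1, f ((2 - x) / 3) = (1/3) * (1 + f x))
    (hw3 : ∀ x ∈ Set.Icc (0:ℝ) 1, f ((2 + x) / 3) = 1/3 + (2/3) * f x) :
    ∀ x ∈ Set.Icc (0:ℝ) 1, ∀ i : ℕ, 0 < i → f ((2 - x) / 3 ^ i) = (2 ^ (i - 1) / 3 ^ i) * (1 + f x) :=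
  bourbaki_stmt_general f hw1 hw2
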